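/- arXiv:1409.1673 — 5 statements merged into one kernel-verified Lean document; each statement's English description precedes it below -/
import Mathlib

section
/- For pairwise distinct sample indices l0, …, l_{3s−1} ∈ ℕ, the function sending (h_1, …, h_s) ∈ ℂ^s to the determinant of the 3s×3s confluent Vandermonde-type matrix A_s, whose rows for each j = 1,…,s are (h_j^{l_0}, …, h_j^{l_{3s−1}}), (l_0 h_j^{l_0}, …, l_{3s−1} h_j^{l_{3s−1}}), and (l_0² h_j^{l_0}, …, l_{3s−1}² h_j^{l_{3s−1}}), is a polynomial function in h_1, …, h_s that is not identically zero. -/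
open Matrix

theorem stmt_2 (s : ℕ) (hs : 1 ≤ s) (l : Fin (3 * s) → ℕ) (hl : StrictMono l) :
    ∃ P : MvPolynomial (Fin s) ℂ, P ≠ 0 ∧
      ∀ h : Fin s → ℂ,
        (Matrix.of fun (r k : Fin (3 * s)) =>
            ((l k : ℂ)) ^ ((r : ℕ) % 3) *
              (h ⟨(r : ℕ) / 3, by have := r.isLt; omega⟩) ^ (l k)).det =
          MvPolynomial.eval h P := by
  classical
  have hidx : ∀ r : Fin (3 * s), (r : ℕ) / 3 < s := fun r => by have := r.isLt; omega
  have hidx3 : ∀ r : Fin (3 * s), (r : ℕ) % 3 < 3 := fun r => Nat.mod_lt _ (by norm_num)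
  set N : Matrix (Fin (3 * s)) (Fin (3 * s)) (MvPolynomial (Fin s) ℂ) :=
    Matrix.of fun r k =>
      (MvPolynomial.C ((l k : ℂ))) ^ ((r : ℕ) % 3) *
        (MvPolynomial.X (⟨(r : ℕ) / 3, hidx r⟩ : Fin s)) ^ (l k) with hN
  refine ⟨N.det, ?_, ?_⟩
  · -- the determinant polynomial is nonzero
    intro hP0
    set φ : MvPolynomial (Fin s) ℂ →+* Polynomial ℂ :=
      (MvPolynomial.aeval (fun j : Fin s => Polynomial.X ^ (j : ℕ))).toRingHom with hφ
    have hMdet : (N.map φ).det = 0 := by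
      rw [show N.map ⇑φ = φ.mapMatrix N from rfl, ← RingHom.map_det, hP0, map_zero]
    have hM : N.map φ = Matrix.of (fun r k : Fin (3 * s) =>
        (Polynomial.C ((l k : ℂ))) ^ ((r : ℕ) % 3)
          * Polynomial.X ^ (((r : ℕ) / 3) * l k)) := by
      refine Matrix.ext fun r k => ?_
      simp only [hN, Matrix.map_apply, Matrix.of_apply, hφ, AlgHom.toRingHom_eq_coe,
        RingHom.coe_coe, _root_.map_mul, _root_.map_pow, MvPolynomial.aeval_X,
        MvPolynomial.aeval_C, Polynomial.algebraMap_eq, ← pow_mul]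
    -- the target coefficient
    set D : Equiv.Perm (Fin (3 * s)) → ℕ := fun σ => ∑ i : Fin (3 * s), ((σ i : ℕ) / 3) * l i
      with hD
    set c : Equiv.Perm (Fin (3 * s)) → ℂ :=
      fun σ => ∏ i : Fin (3 * s), ((l i : ℂ)) ^ ((σ i : ℕ) % 3) with hc
    have hiff : ∀ σ : Equiv.Perm (Fin (3 * s)),
        D σ = (∑ i : Fin (3 * s), ((i : ℕ) / 3) * l i) ↔
          ∀ i, (σ i : ℕ) / 3 = (i : ℕ) / 3 := by
      intro σ
      constructor
      · intro H
        have hmono : Monovary (fun i : Fin (3 * s) => (i : ℕ) / 3) l := by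
          intro i j hg
          exact Nat.div_le_div_right (le_of_lt (hl.lt_iff_lt.mp hg))
        have hmv : Monovary ((fun i : Fin (3 * s) => (i : ℕ) / 3) ∘ σ) l :=
          (hmono.sum_comp_perm_mul_eq_sum_mul_iff (σ := σ)).mp H
        have hmonotone : Monotone ((fun i : Fin (3 * s) => (i : ℕ) / 3) ∘ σ) := by
          intro i j hij
          rcases eq_or_lt_of_le hij with rfl | hlt
          · exact le_refl _
          · exact hmv (hl hlt)
        have h1 : Monotone
            ((fun i : Fin (3 * s) => (i : ℕ) / 3) ∘ (1 : Equiv.Perm (Fin (3 * s)))) :=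
          fun i j hij => Nat.div_le_div_right hij
        have hfin := Tuple.unique_monotone hmonotone h1
        intro i
        simpa using congrFun hfin i
      · intro H
        exact Finset.sum_congr rfl fun i _ => by rw [H i]
    -- the coefficient of the determinant equals the block-diagonal determinant
    have hcoeff : ((N.map φ).det).coeff (∑ i : Fin (3 * s), ((i : ℕ) / 3) * l i)
        = (Matrix.of fun r k : Fin (3 * s) =>
          if (r : ℕ) / 3 = (k : ℕ) / 3 then ((l k : ℂ)) ^ ((r : ℕ) % 3) else 0).det := by
      rw [hM, Matrix.det_apply', Matrix.det_apply', Polynomial.finset_sum_coeff]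
      apply Finset.sum_congr rfl
      intro σ _
      have hprod : (∏ i : Fin (3 * s),
          (Matrix.of fun r k : Fin (3 * s) =>
            (Polynomial.C ((l k : ℂ))) ^ ((r : ℕ) % 3)
              * Polynomial.X ^ (((r : ℕ) / 3) * l k) : Matrix _ _ (Polynomial ℂ)) (σ i) i)
          = Polynomial.C (c σ) * Polynomial.X ^ (D σ) := by
        simp only [Matrix.of_apply]
        rw [Finset.prod_mul_distrib, hc, hD, Finset.prod_pow_eq_pow_sum]
        congr 1
        rw [map_prod]
        apply Finset.prod_congr rfl
        intro i _
        rw [map_pow]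
      rw [hprod]
      have hsign : ((Equiv.Perm.sign σ : ℤ) : Polynomial ℂ)
          = Polynomial.C ((Equiv.Perm.sign σ : ℤ) : ℂ) := by simp
      rw [hsign, ← mul_assoc, ← Polynomial.C_mul, Polynomial.coeff_C_mul,
        Polynomial.coeff_X_pow]
      have hB : (∏ i : Fin (3 * s),
          (Matrix.of fun r k : Fin (3 * s) =>
            if (r : ℕ) / 3 = (k : ℕ) / 3 then ((l k : ℂ)) ^ ((r : ℕ) % 3) else 0) (σ i) i)
          = if (∀ i, (σ i : ℕ) / 3 = (i : ℕ) / 3) then c σ else 0 := by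
        by_cases hb : ∀ i, (σ i : ℕ) / 3 = (i : ℕ) / 3
        · rw [if_pos hb, hc]
          apply Finset.prod_congr rfl
          intro i _
          simp [hb i]
        · rw [if_neg hb]
          push_neg at hb
          obtain ⟨i, hi⟩ := hb
          apply Finset.prod_eq_zero (Finset.mem_univ i)
          simp [hi]
      rw [hB]
      by_cases hb : ∀ i, (σ i : ℕ) / 3 = (i : ℕ) / 3
      · rw [if_pos hb, if_pos (((hiff σ).mpr hb)).symm, mul_one]
      · rw [if_neg hb, if_neg (fun hc2 => hb ((hiff σ).mp hc2.symm)), mul_zero, mul_zero]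
    -- the block-diagonal determinant is nonzero
    have hBdet : (Matrix.of fun r k : Fin (3 * s) =>
        if (r : ℕ) / 3 = (k : ℕ) / 3 then ((l k : ℂ)) ^ ((r : ℕ) % 3) else 0).det ≠ 0 := by
      set e : Fin 3 × Fin s ≃ Fin (3 * s) :=
        (Equiv.prodComm (Fin 3) (Fin s)).trans
          (finProdFinEquiv.trans (finCongr (mul_comm s 3))) with he
      have heval : ∀ p : Fin 3 × Fin s, (e p : ℕ) = (p.1 : ℕ) + 3 * (p.2 : ℕ) := fun p => rfl
      have hesymm : ∀ r : Fin (3 * s),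
          e.symm r = (⟨(r : ℕ) % 3, hidx3 r⟩, ⟨(r : ℕ) / 3, hidx r⟩) := by
        intro r
        rw [Equiv.symm_apply_eq]
        apply Fin.ext
        rw [heval]
        simp
        omega
      set V : Fin s → Matrix (Fin 3) (Fin 3) ℂ :=
        fun j => (Matrix.vandermonde fun k : Fin 3 => ((l (e (k, j)) : ℂ)))ᵀ with hV
      have hBeq : (Matrix.of fun r k : Fin (3 * s) =>
          if (r : ℕ) / 3 = (k : ℕ) / 3 then ((l k : ℂ)) ^ ((r : ℕ) % 3) else 0)
          = (Matrix.blockDiagonal V).submatrix e.symm e.symm := by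
        ext r k
        rw [Matrix.submatrix_apply, hesymm r, hesymm k, Matrix.blockDiagonal_apply]
        simp only [Matrix.of_apply, hV, Matrix.transpose_apply, Matrix.vandermonde_apply]
        by_cases hb : (r : ℕ) / 3 = (k : ℕ) / 3
        · rw [if_pos hb, if_pos (by exact Fin.ext hb)]
          have hk : e (⟨(k : ℕ) % 3, hidx3 k⟩, ⟨(r : ℕ) / 3, hidx r⟩) = k := by
            apply Fin.ext; rw [heval]; simp; omega
          rw [hk]
        · rw [if_neg hb, if_neg (fun hc => hb (by simpa [Fin.ext_iff] using hc))]
      rw [hBeq, Matrix.det_submatrix_equiv_self, Matrix.det_blockDiagonal]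
      apply Finset.prod_ne_zero_iff.mpr
      intro j _
      rw [hV, Matrix.det_transpose, Matrix.det_vandermonde]
      apply Finset.prod_ne_zero_iff.mpr
      intro a _
      apply Finset.prod_ne_zero_iff.mpr
      intro b hb
      rw [Finset.mem_Ioi] at hb
      rw [sub_ne_zero]
      intro hcontra
      have h1 : l (e (b, j)) = l (e (a, j)) := Nat.cast_injective hcontra
      have h2 : e (b, j) = e (a, j) := hl.injective h1
      have h3 : b = a := by
        have := congrArg Prod.fst (e.injective h2)
        simpa using this
      exact absurd h3 (ne_of_gt hb)
    rw [hMdet] at hcoeff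
    exact hBdet (by simpa using hcoeff.symm)
  · intro h
    rw [RingHom.map_det]
    congr 1
    ext r k
    simp [hN, Matrix.map_apply]
end

section
/- Let D(z) = d_1 z^{−1} + d_0 + d_1* z with d_0 = −(αβ+1)/2, d_1 = (1−αβ)/4 + i(α+β)/4, α = tan(ω_L/2), β = tan(ω_H/2), where −π < ω_L < ω_H < π. Then the real-valued function D(ω) := D(e^{iω}) satisfies D(ω) ≥ 0 for ω ∈ [ω_L, ω_H] and D(ω) < 0 for ω ∈ (−π, π) \ [ω_L, ω_H]. -/
open Real

theorem stmt_5 (ωL ωH : ℝ) (hL : -π < ωL) (hLH : ωL < ωH) (hH : ωH < π)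
    (α β : ℝ) (hα : α = Real.tan (ωL / 2)) (hβ : β = Real.tan (ωH / 2))
    (d0 : ℝ) (hd0 : d0 = -(α * β + 1) / 2)
    (d1 : ℂ) (hd1 : d1 = (1 - α * β) / 4 + Complex.I * ((α + β) / 4))
    (D : ℝ → ℂ)
    (hD : D = fun (ω : ℝ) => d1 * Complex.exp (-Complex.I * ω) + (d0 : ℂ) +
      (starRingEnd ℂ) d1 * Complex.exp (Complex.I * ω)) :
    (∀ ω : ℝ, (D ω).im = 0) ∧
    (∀ ω ∈ Set.Icc ωL ωH, 0 ≤ (D ω).re) ∧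
    (∀ ω ∈ Set.Ioo (-π) π \ Set.Icc ωL ωH, (D ω).re < 0) := by
  have hc : (starRingEnd ℂ) d1 = (1 - (α:ℂ) * β) / 4 - Complex.I * ((α + β) / 4) := by
    rw [hd1]
    simp [map_add, map_mul, map_sub, map_div₀, map_ofNat, Complex.conj_I, Complex.conj_ofReal]
    ring
  have him : ∀ ω : ℝ, (D ω).im = 0 := by
    intro ω
    simp [hD, hd1, hc, hd0, Complex.exp_re, Complex.exp_im, Complex.add_im, Complex.mul_im,
      Complex.mul_re, Complex.div_im, Complex.div_re]
    ring
  have hre : ∀ ω : ℝ, (D ω).re =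
      (α * Real.cos (ω/2) - Real.sin (ω/2)) * (Real.sin (ω/2) - β * Real.cos (ω/2)) := by
    intro ω
    have h1 := Real.cos_two_mul (ω/2)
    have h2 := Real.sin_two_mul (ω/2)
    rw [show (2:ℝ) * (ω/2) = ω by ring] at h1 h2
    have h3 : Real.sin (ω/2)^2 + Real.cos (ω/2)^2 = 1 := Real.sin_sq_add_cos_sq _
    simp [hD, hd1, hc, hd0, Complex.exp_re, Complex.exp_im, Complex.add_re, Complex.mul_im,
      Complex.mul_re, Complex.div_im, Complex.div_re]
    rw [h1, h2]
    nlinarith [h3]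
  have hmono : ∀ x y : ℝ, -π < x → x ≤ y → y < π → Real.tan (x/2) ≤ Real.tan (y/2) := by
    intro x y hx hxy hy
    exact Real.strictMonoOn_tan.monotoneOn ⟨by linarith, by linarith⟩
      ⟨by linarith, by linarith⟩ (by linarith)
  have hsmono : ∀ x y : ℝ, -π < x → x < y → y < π → Real.tan (x/2) < Real.tan (y/2) := by
    intro x y hx hxy hy
    exact Real.strictMonoOn_tan ⟨by linarith, by linarith⟩
      ⟨by linarith, by linarith⟩ (by linarith)
  have hab : α < β := by rw [hα, hβ]; exact hsmono _ _ hL hLH hH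
  refine ⟨him, ?_, ?_⟩
  · intro ω hω
    have hcpos : 0 < Real.cos (ω/2) :=
      Real.cos_pos_of_mem_Ioo ⟨by linarith [hω.1], by linarith [hω.2]⟩
    have hts : Real.sin (ω/2) = Real.tan (ω/2) * Real.cos (ω/2) := by
      rw [Real.tan_eq_sin_div_cos]; field_simp
    have htL : α ≤ Real.tan (ω/2) := hα ▸ hmono _ _ hL hω.1 (by linarith [hω.2])
    have htH : Real.tan (ω/2) ≤ β := hβ ▸ hmono _ _ (by linarith [hω.1]) hω.2 hH
    rw [hre ω, hts]
    have f1 : α * Real.cos (ω/2) - Real.tan (ω/2) * Real.cos (ω/2) ≤ 0 := by nlinarith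
    have f2 : Real.tan (ω/2) * Real.cos (ω/2) - β * Real.cos (ω/2) ≤ 0 := by nlinarith
    nlinarith [mul_nonneg (neg_nonneg.2 f1) (neg_nonneg.2 f2)]
  · intro ω ⟨⟨ha, hb⟩, hnot⟩
    have hcpos : 0 < Real.cos (ω/2) :=
      Real.cos_pos_of_mem_Ioo ⟨by linarith, by linarith⟩
    have hts : Real.sin (ω/2) = Real.tan (ω/2) * Real.cos (ω/2) := by
      rw [Real.tan_eq_sin_div_cos]; field_simp
    rw [hre ω, hts]
    rcases not_and_or.1 (fun h => hnot ⟨h.1, h.2⟩) with h | h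
    · push_neg at h
      have ht : Real.tan (ω/2) < α := hα ▸ hsmono _ _ ha h (by linarith)
      have f1 : 0 < α * Real.cos (ω/2) - Real.tan (ω/2) * Real.cos (ω/2) := by nlinarith
      have f2 : Real.tan (ω/2) * Real.cos (ω/2) - β * Real.cos (ω/2) < 0 := by nlinarith
      exact mul_neg_of_pos_of_neg f1 f2
    · push_neg at h
      have ht : β < Real.tan (ω/2) := hβ ▸ hsmono _ _ (by linarith) h hb
      have f1 : α * Real.cos (ω/2) - Real.tan (ω/2) * Real.cos (ω/2) < 0 := by nlinarith
      have f2 : 0 < Real.tan (ω/2) * Real.cos (ω/2) - β * Real.cos (ω/2) := by nlinarith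
      exact mul_neg_of_neg_of_pos f1 f2
end

section
/- Let q ∈ ℂ^n and G ∈ ℂ^{n×n} be Hermitian. If the block matrix [[G, q],[q*, 1]] is positive semidefinite and tr(Θ_k G) = δ_{k,0} for all 0 ≤ k ≤ n−1, then |Σ_{l=0}^{n−1} q_l e^{−i2πfl}| ≤ 1 for every f ∈ [0,1]. -/
/-!
For `e = (e^{2πifl})_l` we have `e* q = Q(f)`, and the Schur complement `G - q q*` of the block
matrix is positive semidefinite, so `|Q(f)|² ≤ e* G e`. Expanding `e* G e` along the diagonals
of `G` gives `Σ_k e^{2πifk} · (sum of the k-th superdiagonal of G)`. The trace conditions fix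
the sums along the subdiagonals and Hermitian symmetry those along the superdiagonals, so only
the main diagonal survives and `e* G e = tr G = 1`.
-/

open Matrix ComplexOrder Real

/-- The `m × m` elementary Toeplitz matrix with ones on the `k`-th diagonal. -/
def elemToeplitz (m : ℕ) (k : ℤ) : Matrix (Fin m) (Fin m) ℂ :=
  Matrix.of fun p q => if (q : ℤ) - (p : ℤ) = k then 1 else 0

theorem Matrix.PosSemidef.norm_sq_star_dotProduct_le_re {𝕜 m : Type*} [RCLike 𝕜] [Fintype m]
    [DecidableEq m] {G : Matrix m m 𝕜} {q : m → 𝕜}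
    (h : (fromBlocks G (replicateCol (Fin 1) q) (replicateRow (Fin 1) (star q)) 1).PosSemidef)
    (x : m → 𝕜) : ‖star x ⬝ᵥ q‖ ^ 2 ≤ RCLike.re (star x ⬝ᵥ (G *ᵥ x)) := by
  have hschur : (G - vecMulVec q (star q)).PosSemidef := by
    rw [vecMulVec_eq (Fin 1), ← conjTranspose_replicateCol] at *
    have : Invertible (1 : Matrix (Fin 1) (Fin 1) 𝕜) := invertibleOne
    have := (PosDef.fromBlocks₂₂ G (replicateCol (Fin 1) q) (PosDef.one (n := Fin 1))).mp h
    rwa [inv_one, Matrix.mul_one] at this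
  have := hschur.dotProduct_mulVec_nonneg x
  rw [sub_mulVec, dotProduct_sub, sub_nonneg, vecMulVec_mulVec, dotProduct_smul,
    MulOpposite.smul_eq_mul_unop, MulOpposite.unop_op, star_dotProduct q x, RCLike.star_def,
    RCLike.mul_conj] at this
  have := (RCLike.le_iff_re_im.mp this).1
  rwa [RCLike.re_ofReal_pow] at this

variable {n : ℕ} {R : Type*}

def diagSum [AddCommMonoid R] (G : Matrix (Fin n) (Fin n) R) (k : ℤ) : R :=
  ∑ p : Fin n, ∑ l : Fin n, if (l : ℤ) - (p : ℤ) = k then G p l else 0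

theorem trace_elemToeplitz_mul (G : Matrix (Fin n) (Fin n) ℂ) (k : ℤ) :
    trace (elemToeplitz n k * G) = diagSum G (-k) := by
  simp only [trace, diag, mul_apply, elemToeplitz, of_apply, ite_mul, one_mul, zero_mul, diagSum]
  rw [Finset.sum_comm]
  refine Finset.sum_congr rfl fun _ _ => Finset.sum_congr rfl fun _ _ => ?_
  congr 1
  simp only [eq_iff_iff]; omega

theorem Matrix.IsHermitian.diagSum_neg [AddCommMonoid R] [StarAddMonoid R]
    {G : Matrix (Fin n) (Fin n) R} (hG : G.IsHermitian) (k : ℤ) :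
    diagSum G (-k) = star (diagSum G k) := by
  simp only [diagSum, star_sum, apply_ite star, star_zero]
  rw [Finset.sum_comm]
  refine Finset.sum_congr rfl fun _ _ => Finset.sum_congr rfl fun _ _ => ?_
  rw [hG.apply]
  congr 1
  simp only [eq_iff_iff]; omega

theorem sum_sum_mul_eq_sum_diagSum [CommSemiring R] (G : Matrix (Fin n) (Fin n) R) (g : ℤ → R) :
    ∑ p : Fin n, ∑ l : Fin n, g ((l : ℤ) - (p : ℤ)) * G p l =
      ∑ k ∈ Finset.Ioo (-n : ℤ) n, g k * diagSum G k := by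
  calc ∑ p : Fin n, ∑ l : Fin n, g ((l : ℤ) - (p : ℤ)) * G p l
      = ∑ p : Fin n, ∑ l : Fin n, ∑ k ∈ Finset.Ioo (-n : ℤ) n,
          if (l : ℤ) - (p : ℤ) = k then g k * G p l else 0 := by
        refine Finset.sum_congr rfl fun p _ => Finset.sum_congr rfl fun l _ => ?_
        rw [Finset.sum_ite_eq, if_pos (by simp only [Finset.mem_Ioo]; omega)]
    _ = ∑ k ∈ Finset.Ioo (-n : ℤ) n, g k * diagSum G k := by
        simp only [diagSum, Finset.mul_sum, mul_ite, mul_zero]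
        exact (Finset.sum_congr rfl fun _ _ => Finset.sum_comm).trans Finset.sum_comm

theorem diagSum_eq_of_trace_elemToeplitz_mul {G : Matrix (Fin n) (Fin n) ℂ}
    (hG : G.IsHermitian)
    (htr : ∀ k : ℕ, k ≤ n - 1 →
      trace (elemToeplitz n (k : ℤ) * G) = if k = 0 then 1 else 0) :
    ∀ k ∈ Finset.Ioo (-n : ℤ) n, diagSum G k = if k = 0 then 1 else 0 := by
  intro k hk
  rw [Finset.mem_Ioo] at hk
  obtain ⟨m, rfl | rfl⟩ := Int.eq_nat_or_neg k
  · rw [← neg_neg (m : ℤ), hG.diagSum_neg, ← trace_elemToeplitz_mul, htr m (by omega)]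
    simp [apply_ite star]
  · rw [← trace_elemToeplitz_mul, htr m (by omega)]
    simp

theorem sum_sum_mul_eq_of_diagSum [CommSemiring R] {G : Matrix (Fin n) (Fin n) R}
    (hn : 0 < n) (hdiag : ∀ k ∈ Finset.Ioo (-n : ℤ) n, diagSum G k = if k = 0 then 1 else 0)
    (g : ℤ → R) :
    ∑ p : Fin n, ∑ l : Fin n, g ((l : ℤ) - (p : ℤ)) * G p l = g 0 := by
  rw [sum_sum_mul_eq_sum_diagSum, Finset.sum_congr rfl fun k hk => by rw [hdiag k hk],
    Finset.sum_eq_single_of_mem 0 (by simp [hn])]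
  · simp
  · intro k _ hk
    simp [hk]

noncomputable def expVec (n : ℕ) (θ : ℝ) : Fin n → ℂ :=
  fun l => Complex.exp (Complex.I * (θ * (l : ℕ)))

theorem star_expVec (θ : ℝ) (l : Fin n) :
    star (expVec n θ l) = Complex.exp (-Complex.I * (θ * (l : ℕ))) := by
  rw [expVec, Complex.star_def, ← Complex.exp_conj]
  simp

theorem star_expVec_mul_expVec (θ : ℝ) (p l : Fin n) :
    star (expVec n θ p) * expVec n θ l =
      Complex.exp (Complex.I * (θ * (((l : ℤ) - (p : ℤ) : ℤ) : ℂ))) := by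
  rw [star_expVec, expVec, ← Complex.exp_add]
  push_cast
  ring_nf

theorem star_expVec_dotProduct_mulVec_eq_one {G : Matrix (Fin n) (Fin n) ℂ} (hn : 0 < n)
    (hdiag : ∀ k ∈ Finset.Ioo (-n : ℤ) n, diagSum G k = if k = 0 then 1 else 0) (θ : ℝ) :
    star (expVec n θ) ⬝ᵥ (G *ᵥ expVec n θ) = 1 := by
  have := sum_sum_mul_eq_of_diagSum hn hdiag fun k : ℤ => Complex.exp (Complex.I * (θ * k))
  simp only [Int.cast_zero, mul_zero, Complex.exp_zero] at this
  rw [← this]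
  simp only [dotProduct, mulVec, Pi.star_apply, Finset.mul_sum, ← star_expVec_mul_expVec]
  ac_rfl

theorem star_expVec_dotProduct (θ : ℝ) (q : Fin n → ℂ) :
    star (expVec n θ) ⬝ᵥ q =
      ∑ l : Fin n, q l * Complex.exp (-Complex.I * (θ * (l : ℕ))) := by
  simp only [dotProduct, Pi.star_apply, star_expVec, mul_comm]

theorem stmt_9 (n : ℕ) (q : Fin n → ℂ) (G : Matrix (Fin n) (Fin n) ℂ)
    (hG : G.IsHermitian)
    (hblock : (Matrix.fromBlocks G (Matrix.replicateCol (Fin 1) q)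
      (Matrix.replicateRow (Fin 1) (star q)) 1).PosSemidef)
    (htr : ∀ k : ℕ, k ≤ n - 1 →
      Matrix.trace (elemToeplitz n (k : ℤ) * G) = if k = 0 then 1 else 0) :
    ∀ f ∈ Set.Icc (0 : ℝ) 1,
      ‖∑ l : Fin n, q l * Complex.exp (-Complex.I * (2 * π * f * (l : ℕ)))‖ ≤ 1 := by
  intro f _
  obtain rfl | hn := n.eq_zero_or_pos
  · simp
  have hQ := hblock.norm_sq_star_dotProduct_le_re (expVec n (2 * π * f))
  rw [star_expVec_dotProduct_mulVec_eq_one hn (diagSum_eq_of_trace_elemToeplitz_mul hG htr),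
    star_expVec_dotProduct, RCLike.one_re] at hQ
  push_cast at hQ
  exact (pow_le_one_iff_of_nonneg (norm_nonneg _) two_ne_zero).mp hQ
end

section
/- Any positive semidefinite Hermitian Toeplitz matrix T ∈ ℂ^{n×n} of rank r ≤ n admits a Vandermonde decomposition T = U R U*, where U ∈ ℂ^{n×r} has columns u_j with entries (u_j)_l = e^{i2π f_j l} for distinct frequencies f_j ∈ [0,1), and R = diag(b_1, …, b_r) with b_j > 0 real. -/
/-!
Factor `T` as the Gram matrix of vectors `b 0, …, b (n-1)` in `ℂⁿ`. The Toeplitz property says that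
`b k ↦ b (k+1)` preserves inner products, so it extends to a unitary `U` with `b k = U^k (b 0)`.
Expanding `b 0` in an orthonormal eigenbasis `e` of `U` with eigenvalues `ν p` on the unit circle
gives `T k l = ∑ p, |⟪e p, b 0⟫|² ν̄ₚᵏ νₚˡ`. Such an eigenbasis exists because the Cayley transform
`i (c - U)⁻¹ (c + U)`, for `|c| = 1` outside the spectrum of `U`, is self-adjoint. Merging equal
nodes and discarding zero weights leaves `T = V diag(w) Vᴴ` with `V` a Vandermonde matrix on
distinct nodes and `w > 0`; then `rank T = rank V` is the number of nodes, and the nodes are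
written as `exp (2πi f)`.
-/

open Matrix ComplexOrder Real

open Complex in
theorem isSelfAdjoint_of_cayley {R : Type*} [Ring R] [StarRing R] [Algebra ℂ R]
    [StarModule ℂ R] {u h : R} {c : ℂ} (hu : u ∈ unitary R) (hc : ‖c‖ = 1)
    (hx : IsUnit (algebraMap ℂ R c - u))
    (hh : (algebraMap ℂ R c - u) * h = I • (algebraMap ℂ R c + u)) : IsSelfAdjoint h := by
  set x := algebraMap ℂ R c - u
  set k := I • (algebraMap ℂ R c + u)
  -- both sides equal `I • (star c • u - c • star u)`
  have key : x * star k = k * star x := by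
    replace hc : starRingEnd ℂ c * c = 1 := by rw [conj_mul', hc]; norm_num
    simp only [x, k, star_smul, star_add, star_sub, Algebra.algebraMap_eq_smul_one, star_def,
      conj_I, star_one, mul_add, mul_sub, add_mul, sub_mul, smul_mul_assoc, mul_smul_comm,
      one_mul, smul_smul, Unitary.mul_star_self_of_mem hu]
    linear_combination (norm := module) (-2 * I) • hc • (1 : R)
  refine hx.mul_left_cancel <| hx.star.mul_right_cancel ?_
  rw [hh, mul_assoc, ← star_mul, hh, key]

theorem Complex.exists_norm_eq_one_notMem {s : Set ℂ} (hs : s.Finite) :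
    ∃ c : ℂ, ‖c‖ = 1 ∧ c ∉ s := by
  have hdim : 1 < Module.rank ℝ ℂ := by simp [Complex.rank_real_complex]
  have hsphere : (Metric.sphere (0 : ℂ) 1).Infinite :=
    (isConnected_sphere hdim 0 zero_le_one).isPreconnected.infinite_of_nontrivial
      ⟨1, by simp, -1, by simp, by norm_num⟩
  obtain ⟨c, hc, hcs⟩ := (hsphere.sdiff hs).nonempty
  exact ⟨c, mem_sphere_zero_iff_norm.mp hc, hcs⟩

namespace LinearIsometryEquiv

variable {E : Type*} [NormedAddCommGroup E] [InnerProductSpace ℂ E]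

theorem toLinearMap_mem_unitary [FiniteDimensional ℂ E] (U : E ≃ₗᵢ[ℂ] E) :
    U.toLinearMap ∈ unitary (E →ₗ[ℂ] E) := by
  rw [Unitary.mem_iff, LinearMap.star_eq_adjoint, U.adjoint_toLinearMap_eq_symm]
  constructor <;> ext x <;> simp

open Complex in
theorem exists_orthonormalBasis_apply_eq_smul [FiniteDimensional ℂ E] {n : ℕ}
    (hn : Module.finrank ℂ E = n) (U : E ≃ₗᵢ[ℂ] E) :
    ∃ (e : OrthonormalBasis (Fin n) ℂ E) (ν : Fin n → ℂ), ∀ p, U (e p) = ν p • e p := by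
  set u : E →ₗ[ℂ] E := U.toLinearMap
  obtain ⟨c, hc, hcu⟩ := exists_norm_eq_one_notMem (Module.End.finite_spectrum u)
  have hx := spectrum.notMem_iff.mp hcu
  set h := ↑hx.unit⁻¹ * (I • (algebraMap ℂ _ c + u))
  have hh : (algebraMap ℂ _ c - u) * h = I • (algebraMap ℂ _ c + u) := by
    simp only [h, ← mul_assoc, IsUnit.mul_val_inv, one_mul]
  have hsym : h.IsSymmetric := (LinearMap.isSymmetric_iff_isSelfAdjoint h).mpr <|
    isSelfAdjoint_of_cayley U.toLinearMap_mem_unitary hc hx hh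
  refine ⟨hsym.eigenvectorBasis hn, fun p => c * (hsym.eigenvalues hn p - I) /
    (hsym.eigenvalues hn p + I), fun p => ?_⟩
  set e := hsym.eigenvectorBasis hn p
  set μ := hsym.eigenvalues hn p
  have hμ : (μ : ℂ) + I ≠ 0 := by
    intro h0; simpa using congrArg Complex.im h0
  have he := LinearMap.congr_fun hh e
  simp only [Module.End.mul_apply, LinearMap.sub_apply, LinearMap.add_apply, LinearMap.smul_apply,
    Module.algebraMap_end_apply, show h e = (μ : ℂ) • e from hsym.apply_eigenvectorBasis hn p,
    LinearMap.map_smul] at he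
  have hUe : ((μ : ℂ) + I) • U e = (c * (μ - I)) • e := by
    linear_combination (norm := module) -he
  change U e = (c * (μ - I) / (μ + I)) • e
  rw [div_eq_inv_mul, mul_smul, eq_inv_smul_iff₀ hμ, hUe]

theorem norm_eq_one_of_apply_eq_smul (U : E ≃ₗᵢ[ℂ] E) {x : E} {ν : ℂ} (hx : ‖x‖ = 1)
    (h : U x = ν • x) : ‖ν‖ = 1 := by
  simpa [h, norm_smul, hx] using U.norm_map x

theorem inner_iterate_apply_eq_sum {ι : Type*} [Fintype ι] (U : E ≃ₗᵢ[ℂ] E)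
    (e : OrthonormalBasis ι ℂ E) {ν : ι → ℂ} (he : ∀ p, U (e p) = ν p • e p) (x : E) (k l : ℕ) :
    inner ℂ (U^[k] x) (U^[l] x) =
      ∑ p, (‖inner ℂ (e p) x‖ ^ 2 : ℝ) • (starRingEnd ℂ (ν p) ^ k * ν p ^ l) := by
  have hinner (p : ι) (y : E) : inner ℂ (e p) (U y) = ν p * inner ℂ (e p) y := by
    have hν : ‖ν p‖ = 1 := U.norm_eq_one_of_apply_eq_smul (e.orthonormal.1 p) (he p)
    have := U.inner_map_map (e p) y
    rw [he, inner_smul_left] at this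
    rw [← this, ← mul_assoc, Complex.mul_conj', hν]
    simp
  have hiter (p : ι) (j : ℕ) : inner ℂ (e p) (U^[j] x) = ν p ^ j * inner ℂ (e p) x := by
    induction j with
    | zero => simp
    | succ j ih => rw [Function.iterate_succ_apply', hinner, ih, pow_succ]; ring
  rw [← e.sum_inner_mul_inner]
  refine Finset.sum_congr rfl fun p _ => ?_
  rw [← inner_conj_symm, hiter, hiter, map_mul, map_pow, Complex.real_smul, Complex.ofReal_pow,
    ← Complex.mul_conj']
  ring

end LinearIsometryEquiv

section Isometry

variable {𝕜 E ι : Type*} [RCLike 𝕜] [NormedAddCommGroup E] [InnerProductSpace 𝕜 E]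

theorem norm_linearCombination_eq_of_inner_eq {v w : ι → E}
    (h : ∀ i j, inner 𝕜 (v i) (v j) = inner 𝕜 (w i) (w j)) (a : ι →₀ 𝕜) :
    ‖Finsupp.linearCombination 𝕜 v a‖ = ‖Finsupp.linearCombination 𝕜 w a‖ := by
  simp only [@norm_eq_sqrt_re_inner 𝕜, Finsupp.linearCombination_apply, Finsupp.sum_inner,
    Finsupp.inner_sum, inner_smul_left, inner_smul_right, h]

theorem exists_linearIsometryEquiv_apply_eq [FiniteDimensional 𝕜 E] {v w : ι → E}
    (h : ∀ i j, inner 𝕜 (v i) (v j) = inner 𝕜 (w i) (w j)) :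
    ∃ U : E ≃ₗᵢ[𝕜] E, ∀ i, U (v i) = w i := by
  set φ := Finsupp.linearCombination 𝕜 v
  set ψ := Finsupp.linearCombination 𝕜 w
  have hker : LinearMap.ker φ ≤ LinearMap.ker ψ := fun a ha => by
    rw [LinearMap.mem_ker, ← norm_eq_zero, ← norm_linearCombination_eq_of_inner_eq h, norm_eq_zero]
    exact ha
  set L := (LinearMap.ker φ).liftQ ψ hker ∘ₗ φ.quotKerEquivRange.symm.toLinearMap
  have hL (a : ι →₀ 𝕜) : L ⟨φ a, LinearMap.mem_range_self φ a⟩ = ψ a := by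
    have : φ.quotKerEquivRange (Submodule.Quotient.mk a) = ⟨φ a, LinearMap.mem_range_self φ a⟩ :=
      Subtype.ext (φ.quotKerEquivRange_apply_mk a)
    simp [L, ← this]
  let L' : LinearMap.range φ →ₗᵢ[𝕜] E :=
    ⟨L, by rintro ⟨_, a, rfl⟩; rw [hL, ← norm_linearCombination_eq_of_inner_eq h]; rfl⟩
  refine ⟨L'.extend.toLinearIsometryEquiv rfl, fun i => ?_⟩
  have hφ : φ (Finsupp.single i 1) = v i := by simp [φ]
  have hψ : ψ (Finsupp.single i 1) = w i := by simp [ψ]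
  rw [LinearIsometry.coe_toLinearIsometryEquiv, ← hφ, ← hψ, ← hL]
  exact L'.extend_apply ⟨_, LinearMap.mem_range_self φ _⟩

end Isometry

namespace Matrix

open scoped MatrixOrder in
theorem PosSemidef.exists_eq_gram {m 𝕜 : Type*} [Fintype m] [DecidableEq m] [RCLike 𝕜]
    {A : Matrix m m 𝕜} (hA : A.PosSemidef) : ∃ v : m → EuclideanSpace 𝕜 m, A = gram 𝕜 v := by
  obtain ⟨B, rfl⟩ := CStarAlgebra.nonneg_iff_eq_star_mul_self.mp hA.nonneg
  refine ⟨fun j => WithLp.toLp 2 (fun i => B i j), ?_⟩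
  ext k l
  simp [gram_apply, mul_apply, PiLp.inner_apply, mul_comm]

def IsToeplitz {α : Type*} {n : ℕ} (T : Matrix (Fin n) (Fin n) α) : Prop :=
  ∀ i j i' j' : Fin n, (i : ℤ) - (j : ℤ) = (i' : ℤ) - (j' : ℤ) → T i j = T i' j'

theorem PosSemidef.exists_eq_sum_pow_of_isToeplitz {n : ℕ} {T : Matrix (Fin n) (Fin n) ℂ}
    (hpsd : T.PosSemidef) (htoep : T.IsToeplitz) :
    ∃ (ν : Fin n → ℂ) (w : Fin n → ℝ), (∀ p, ‖ν p‖ = 1) ∧ (∀ p, 0 ≤ w p) ∧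
      ∀ k l, T k l = ∑ p, w p • (ν p ^ (k : ℕ) * starRingEnd ℂ (ν p) ^ (l : ℕ)) := by
  obtain _ | m := n
  · exact ⟨finZeroElim, finZeroElim, finZeroElim, finZeroElim, finZeroElim⟩
  obtain ⟨b, rfl⟩ := hpsd.exists_eq_gram
  obtain ⟨U, hU⟩ := exists_linearIsometryEquiv_apply_eq (v := fun k : Fin m => b k.castSucc)
    (w := fun k => b k.succ) fun k l => htoep _ _ _ _ (by simp)
  have hb (k : Fin (m + 1)) : b k = U^[k] (b 0) := by
    induction k using Fin.induction with
    | zero => rfl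
    | succ k ih => rw [Fin.val_succ, Function.iterate_succ_apply', ← Fin.val_castSucc, ← ih, hU]
  obtain ⟨e, ν, he⟩ := U.exists_orthonormalBasis_apply_eq_smul finrank_euclideanSpace_fin
  refine ⟨fun p => starRingEnd ℂ (ν p), fun p => ‖inner ℂ (e p) (b 0)‖ ^ 2,
    fun p => ?_, fun p => by positivity, fun k l => ?_⟩
  · rw [Complex.norm_conj]
    exact U.norm_eq_one_of_apply_eq_smul (e.orthonormal.1 p) (he p)
  · rw [gram_apply, hb k, hb l, U.inner_iterate_apply_eq_sum e he]
    simp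

end Matrix

namespace Finset

theorem exists_injective_sum_smul_eq {ι α M : Type*} [Fintype ι] [DecidableEq α]
    [AddCommMonoid M] [Module ℝ M] (ν : ι → α) {w : ι → ℝ} (hw : ∀ p, 0 ≤ w p) :
    ∃ (s : ℕ) (μ : Fin s → α) (c : Fin s → ℝ), Function.Injective μ ∧ s ≤ Fintype.card ι ∧
      Set.range μ ⊆ Set.range ν ∧ (∀ j, 0 < c j) ∧
      ∀ F : α → M, ∑ p, w p • F (ν p) = ∑ j, c j • F (μ j) := by
  set c₀ : α → ℝ := fun a => ∑ p with ν p = a, w p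
  set S := (univ.image ν).filter (c₀ · ≠ 0)
  have hsum (F : α → M) : ∑ p, w p • F (ν p) = ∑ a ∈ S, c₀ a • F a := calc
    ∑ p, w p • F (ν p) = ∑ a ∈ univ.image ν, ∑ p with ν p = a, w p • F (ν p) :=
      (sum_fiberwise_of_maps_to (fun p _ => mem_image_of_mem ν (mem_univ p)) _).symm
    _ = ∑ a ∈ univ.image ν, c₀ a • F a := sum_congr rfl fun a _ => by
      rw [sum_smul]; exact sum_congr rfl fun p hp => by rw [(mem_filter.mp hp).2]
    _ = ∑ a ∈ S, c₀ a • F a :=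
      (sum_filter_of_ne (p := (c₀ · ≠ 0)) fun a _ h h0 => h (by rw [h0, zero_smul])).symm
  refine ⟨S.card, fun j => S.equivFin.symm j, fun j => c₀ (S.equivFin.symm j),
    Subtype.val_injective.comp S.equivFin.symm.injective,
    (card_filter_le _ _).trans (card_image_le.trans_eq card_univ), ?_, fun j => ?_, fun F => ?_⟩
  · rintro _ ⟨j, rfl⟩
    obtain ⟨p, -, hp⟩ := mem_image.mp (mem_filter.mp (S.equivFin.symm j).2).1
    exact ⟨p, hp⟩
  · exact (sum_nonneg fun p _ => hw p).lt_of_ne' (mem_filter.mp (S.equivFin.symm j).2).2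
  · rw [hsum, ← S.sum_coe_sort]
    exact (S.equivFin.symm.sum_comp fun a => c₀ a • F a).symm

end Finset

namespace Matrix

def colVandermonde {R κ : Type*} [CommRing R] (n : ℕ) (μ : κ → R) : Matrix (Fin n) κ R :=
  of fun l j => μ j ^ (l : ℕ)

theorem rank_colVandermonde {K κ : Type*} [Field K] [Fintype κ] {n : ℕ} {μ : κ → K}
    (hμ : Function.Injective μ) (hn : Fintype.card κ ≤ n) :
    (colVandermonde n μ).rank = Fintype.card κ := by
  refine le_antisymm (rank_le_card_width _) ?_
  set e := (Fintype.equivFin κ).symm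
  have hsub : (colVandermonde n μ).submatrix (Fin.castLE hn) e = (vandermonde (μ ∘ e))ᵀ := rfl
  have hdet : IsUnit (vandermonde (μ ∘ e))ᵀ.det := by
    rw [det_transpose, isUnit_iff_ne_zero, det_vandermonde_ne_zero_iff]
    exact hμ.comp e.injective
  calc Fintype.card κ = ((colVandermonde n μ).submatrix (Fin.castLE hn) e).rank := by
        rw [hsub, rank_of_isUnit _ ((isUnit_iff_isUnit_det _).mpr hdet), Fintype.card_fin]
    _ ≤ (colVandermonde n μ).rank := rank_submatrix_le _ _ _

theorem rank_mul_diagonal_mul_conjTranspose {𝕜 m κ : Type*} [RCLike 𝕜] [Fintype m] [Fintype κ]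
    [DecidableEq κ] (A : Matrix m κ 𝕜) {c : κ → ℝ} (hc : ∀ j, 0 < c j) :
    (A * diagonal (fun j => (c j : 𝕜)) * Aᴴ).rank = A.rank := by
  set D : Matrix κ κ 𝕜 := diagonal fun j => (√(c j) : 𝕜)
  have hDD : D * Dᴴ = diagonal fun j => (c j : 𝕜) := by
    rw [diagonal_conjTranspose, diagonal_mul_diagonal]
    congr; ext j
    simp [← RCLike.ofReal_mul, Real.mul_self_sqrt (hc j).le]
  have hD : A * diagonal (fun j => (c j : 𝕜)) * Aᴴ = (A * D) * (A * D)ᴴ := by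
    rw [conjTranspose_mul, ← hDD]; simp only [Matrix.mul_assoc]
  have hdet : IsUnit D.det := by
    simp [D, det_diagonal, Finset.prod_ne_zero_iff, Real.sqrt_ne_zero'.mpr (hc _)]
  rw [hD, rank_self_mul_conjTranspose, rank_mul_eq_left_of_isUnit_det _ _ hdet]

theorem exists_colVandermonde_decomposition {n : ℕ} {ι : Type*} [Fintype ι]
    {T : Matrix (Fin n) (Fin n) ℂ} {ν : ι → ℂ} {w : ι → ℝ} (hw : ∀ p, 0 ≤ w p)
    (hT : ∀ k l, T k l = ∑ p, w p • (ν p ^ (k : ℕ) * starRingEnd ℂ (ν p) ^ (l : ℕ))) :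
    ∃ (s : ℕ) (μ : Fin s → ℂ) (c : Fin s → ℝ), Function.Injective μ ∧ s ≤ Fintype.card ι ∧
      Set.range μ ⊆ Set.range ν ∧ (∀ j, 0 < c j) ∧
      T = colVandermonde n μ * diagonal (fun j => (c j : ℂ)) * (colVandermonde n μ)ᴴ := by
  obtain ⟨s, μ, c, hμ, hs, hμν, hc, hsum⟩ := Finset.exists_injective_sum_smul_eq ν hw (M := ℂ)
  refine ⟨s, μ, c, hμ, hs, hμν, hc, ?_⟩
  ext k l
  rw [hT, hsum fun a => a ^ (k : ℕ) * starRingEnd ℂ a ^ (l : ℕ), mul_apply]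
  refine Finset.sum_congr rfl fun j _ => ?_
  simp only [Complex.real_smul, colVandermonde, mul_diagonal, of_apply, conjTranspose_apply,
    star_pow, RCLike.star_def]
  ring

theorem colVandermonde_exp {κ : Type*} (n : ℕ) (f : κ → ℝ) :
    colVandermonde n (fun j => Complex.exp (Complex.I * (2 * π * f j))) =
      of fun (l : Fin n) j => Complex.exp (Complex.I * (2 * π * f j * (l : ℕ))) := by
  ext l j
  rw [colVandermonde, of_apply, of_apply, ← Complex.exp_nat_mul]
  ring_nf

end Matrix

open Complex in
theorem Complex.exists_mem_Ico_exp_eq {μ : ℂ} (hμ : ‖μ‖ = 1) :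
    ∃ f ∈ Set.Ico (0 : ℝ) 1, exp (I * (2 * π * f)) = μ := by
  refine ⟨Int.fract (arg μ / (2 * π)), ⟨Int.fract_nonneg _, Int.fract_lt_one _⟩, ?_⟩
  have h2π : (2 * π : ℂ) ≠ 0 := by exact_mod_cast Real.two_pi_pos.ne'
  have : I * (2 * π * ((Int.fract (arg μ / (2 * π)) : ℝ) : ℂ)) =
      arg μ * I - ⌊arg μ / (2 * π)⌋ * (2 * π * I) := by
    rw [Int.fract]; push_cast; field_simp
  rw [this, exp_sub, exp_int_mul_two_pi_mul_I, div_one]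
  simpa [hμ] using norm_mul_exp_arg_mul_I μ

theorem stmt_10_general (n r : ℕ) (T : Matrix (Fin n) (Fin n) ℂ)
    (hpsd : T.PosSemidef)
    (htoep : ∀ i j i' j' : Fin n, (i : ℤ) - (j : ℤ) = (i' : ℤ) - (j' : ℤ) → T i j = T i' j')
    (hrank : T.rank = r) :
    ∃ (f : Fin r → ℝ) (b : Fin r → ℝ),
      Function.Injective f ∧ (∀ j, f j ∈ Set.Ico (0 : ℝ) 1) ∧ (∀ j, 0 < b j) ∧
      T = (Matrix.of fun (l : Fin n) (j : Fin r) =>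
            Complex.exp (Complex.I * (2 * π * f j * (l : ℕ)))) *
          Matrix.diagonal (fun j => (b j : ℂ)) *
          (Matrix.of fun (l : Fin n) (j : Fin r) =>
            Complex.exp (Complex.I * (2 * π * f j * (l : ℕ))))ᴴ := by
  obtain ⟨ν, w, hν, hw, hTν⟩ := hpsd.exists_eq_sum_pow_of_isToeplitz htoep
  obtain ⟨s, μ, c, hμ, hs, hμν, hc, rfl⟩ := exists_colVandermonde_decomposition hw hTν
  obtain rfl : s = r := calc
    s = (colVandermonde n μ).rank := by
      rw [rank_colVandermonde hμ (by simpa using hs), Fintype.card_fin]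
    _ = r := (rank_mul_diagonal_mul_conjTranspose _ hc).symm.trans hrank
  have hμ1 (j : Fin s) : ‖μ j‖ = 1 := by
    obtain ⟨p, hp⟩ := hμν ⟨j, rfl⟩
    rw [← hp, hν]
  choose f hf hfμ using fun j => Complex.exists_mem_Ico_exp_eq (hμ1 j)
  refine ⟨f, c, fun j j' h => hμ (by rw [← hfμ, ← hfμ, h]), hf, hc, ?_⟩
  rw [← colVandermonde_exp, funext hfμ]

theorem stmt_10 (n r : ℕ) (T : Matrix (Fin n) (Fin n) ℂ)
    (hpsd : T.PosSemidef)
    (htoep : ∀ i j i' j' : Fin n, (i : ℤ) - (j : ℤ) = (i' : ℤ) - (j' : ℤ) → T i j = T i' j')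
    (hrank : T.rank = r) (hr : r ≤ n) :
    ∃ (f : Fin r → ℝ) (b : Fin r → ℝ),
      Function.Injective f ∧ (∀ j, f j ∈ Set.Ico (0 : ℝ) 1) ∧ (∀ j, 0 < b j) ∧
      T = (Matrix.of fun (l : Fin n) (j : Fin r) =>
            Complex.exp (Complex.I * (2 * π * f j * (l : ℕ)))) *
          Matrix.diagonal (fun j => (b j : ℂ)) *
          (Matrix.of fun (l : Fin n) (j : Fin r) =>
            Complex.exp (Complex.I * (2 * π * f j * (l : ℕ))))ᴴ :=
  stmt_10_general n r T hpsd htoep hrank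
end

section
/- Under the dual-certificate conditions, the weighted atomic norm minimizer is unique: suppose the atoms a_M(f_1),…,a_M(f_s) restricted to the sample set M are linearly independent, and there exists q supported on M with Q(f_j) = w(f_j)·sign(c_j) for all true frequencies f_j and |Q(f)| < w(f) for all f ∉ {f_1,…,f_s}, where Q(f) = ⟨q, a(f)⟩ and w is a positive piecewise-constant weight function. Then any representation x̂ = Σ_j c_j′ e^{i2πf_j′l} (l ∈ M) agreeing with x on M and attaining the same weighted coefficient sum Σ w(f_j′)|c_j′| = Σ w(f_j)|c_j| must use exactly the frequencies {f_1,…,f_s} with the same coefficients c_j. -/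
/-!
Pair the dual vector `q` with both representations. Since they agree on `M`, where `q` lives,
`Re ∑ conj(c'ⱼ) Q(f'ⱼ) = ∑ conj(cⱼ) Q(fⱼ) = ∑ w(fⱼ)|cⱼ| = ∑ w(f'ⱼ)|c'ⱼ|`, while `|Q| ≤ w` bounds the
left side by `∑ |c'ⱼ| |Q(f'ⱼ)|`. So `|Q(f'ⱼ)| = w(f'ⱼ)` whenever `c'ⱼ ≠ 0`, and the strict bound
off `{f₁, …, f_s}` puts every `f'ⱼ` among the `fₖ`. Linear independence of the atoms on `M` then
identifies the coefficients and shows that every `fₖ` is used.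
-/

open Real ComplexConjugate

section DualCertificate

variable {α ι κ : Type*} [Fintype κ]

theorem sum_conj_mul_sum_mul_conj (M : Finset ι) (a : α → ι → ℂ) (q : ι → ℂ)
    (F : κ → α) (C : κ → ℂ) :
    ∑ j, conj (C j) * ∑ l ∈ M, q l * conj (a (F j) l) =
      ∑ l ∈ M, q l * conj (∑ j, C j * a (F j) l) := by
  simp only [Finset.mul_sum, map_sum, map_mul]
  rw [Finset.sum_comm]
  exact Finset.sum_congr rfl fun l _ => Finset.sum_congr rfl fun j _ => by ring

theorem mem_of_sum_mul_norm_le_re {F : κ → α} {C : κ → ℂ} {Q : α → ℂ} {w : α → ℝ}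
    {S : Set α} (hC : ∀ j, C j ≠ 0) (hle : ∀ j, ‖Q (F j)‖ ≤ w (F j))
    (hlt : ∀ j, F j ∉ S → ‖Q (F j)‖ < w (F j))
    (hsum : ∑ j, w (F j) * ‖C j‖ ≤ (∑ j, conj (C j) * Q (F j)).re) (j : κ) : F j ∈ S := by
  by_contra hj
  have hre : (∑ j, conj (C j) * Q (F j)).re ≤ ∑ j, ‖Q (F j)‖ * ‖C j‖ :=
    calc (∑ j, conj (C j) * Q (F j)).re ≤ ‖∑ j, conj (C j) * Q (F j)‖ := Complex.re_le_norm _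
      _ ≤ ∑ j, ‖conj (C j) * Q (F j)‖ := norm_sum_le _ _
      _ = ∑ j, ‖Q (F j)‖ * ‖C j‖ := by simp only [norm_mul, Complex.norm_conj, mul_comm]
  have hlt_sum : ∑ j, ‖Q (F j)‖ * ‖C j‖ < ∑ j, w (F j) * ‖C j‖ :=
    Finset.sum_lt_sum (fun i _ => mul_le_mul_of_nonneg_right (hle i) (norm_nonneg _))
      ⟨j, Finset.mem_univ j, mul_lt_mul_of_pos_right (hlt j hj) (norm_pos_iff.mpr (hC j))⟩
  linarith

end DualCertificate

theorem Complex.conj_mul_ofReal_mul_div_norm (r : ℝ) (z : ℂ) :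
    conj z * (r * (z / ‖z‖)) = r * ‖z‖ := by
  rcases eq_or_ne z 0 with rfl | hz
  · simp
  have hnorm : (‖z‖ : ℂ) ≠ 0 := by exact_mod_cast norm_ne_zero_iff.mpr hz
  field_simp
  rw [← Complex.conj_mul']
  ring

theorem Complex.norm_ofReal_mul_div_norm_le {r : ℝ} (hr : 0 ≤ r) (z : ℂ) :
    ‖(r : ℂ) * (z / ‖z‖)‖ ≤ r := by
  rcases eq_or_ne z 0 with rfl | hz
  · simpa using hr
  rw [norm_mul, norm_div, Complex.norm_real, Complex.norm_real, norm_norm,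
    div_self (norm_ne_zero_iff.mpr hz), mul_one, Real.norm_of_nonneg hr]

theorem LinearIndependent.bijective_of_sum_comp_eq {R V ι ι' : Type*} [Semiring R]
    [AddCommMonoid V] [Module R V] [Fintype ι] [Fintype ι'] {v : ι → V}
    (hv : LinearIndependent R v) {c : ι → R} (hc : ∀ k, c k ≠ 0) {g : ι' → ι}
    (hg : Function.Injective g) {c' : ι' → R}
    (h : ∑ j, c' j • v (g j) = ∑ k, c k • v k) :
    Function.Bijective g ∧ ∀ j, c' j = c (g j) := by
  classical
  -- extending `c'` by zero along `g` rewrites the left side in the family `v` itself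
  have hext : ∑ k, Function.extend g c' 0 k • v k = ∑ k, c k • v k := by
    rw [← h]
    refine (Fintype.sum_of_injective g hg _ _ (fun k hk => ?_) fun j => ?_).symm
    · rw [Function.extend_apply' _ _ _ (by simpa using hk), Pi.zero_apply, zero_smul]
    · rw [hg.extend_apply]
  have hcoeff := Fintype.linearIndependent_iffₛ.mp hv _ _ hext
  refine ⟨⟨hg, fun k => ?_⟩, fun j => by rw [← hcoeff, hg.extend_apply]⟩
  by_contra hk
  exact hc k (by rw [← hcoeff, Function.extend_apply' _ _ _ hk, Pi.zero_apply])

noncomputable def fourierExp (g : ℝ) (l : ℕ) : ℂ :=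
  Complex.exp (Complex.I * (2 * π * g * l))

theorem conj_fourierExp (g : ℝ) (l : ℕ) :
    conj (fourierExp g l) = Complex.exp (-Complex.I * (2 * π * g * l)) := by
  rw [fourierExp, ← Complex.exp_conj]
  simp only [map_mul, Complex.conj_I, Complex.conj_ofReal, map_ofNat, map_natCast, neg_mul]

theorem stmt_12_general (n s : ℕ) (M : Finset (Fin n)) (f : Fin s → ℝ) (c : Fin s → ℂ)
    (hc : ∀ j, c j ≠ 0)
    (w : ℝ → ℝ) (hw : ∀ g, 0 < w g)
    (hind : LinearIndependent ℂ
      (fun (j : Fin s) => fun (l : {l // l ∈ M}) =>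
        Complex.exp (Complex.I * (2 * π * f j * ((l : Fin n) : ℕ)))))
    (q : Fin n → ℂ)
    (Q : ℝ → ℂ)
    (hQ : Q = fun (g : ℝ) => ∑ l ∈ M, q l * Complex.exp (-Complex.I * (2 * π * g * (l : ℕ))))
    (hsign : ∀ j, Q (f j) = (w (f j) : ℂ) * (c j / (‖c j‖ : ℂ)))
    (hlt : ∀ g ∈ Set.Icc (0 : ℝ) 1, g ∉ Set.range f → ‖Q g‖ < w g)
    (s' : ℕ) (f' : Fin s' → ℝ) (c' : Fin s' → ℂ)
    (hf' : Function.Injective f') (hf'1 : ∀ j, f' j ∈ Set.Icc (0 : ℝ) 1)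
    (hc' : ∀ j, c' j ≠ 0)
    (hagree : ∀ l ∈ M,
      ∑ j, c' j * Complex.exp (Complex.I * (2 * π * f' j * (l : ℕ))) =
      ∑ j, c j * Complex.exp (Complex.I * (2 * π * f j * (l : ℕ))))
    (hsum : ∑ j, w (f' j) * ‖c' j‖ = ∑ j, w (f j) * ‖c j‖) :
    ∃ e : Fin s' ≃ Fin s, ∀ j, f' j = f (e j) ∧ c' j = c (e j) := by
  have hQ_eq : ∀ g, Q g = ∑ l ∈ M, q l * conj (fourierExp g (l : Fin n)) := by
    simp [hQ, conj_fourierExp]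
  have hpair : ∑ j, conj (c' j) * Q (f' j) = ∑ j, conj (c j) * Q (f j) := by
    have hdual {m : ℕ} (F : Fin m → ℝ) (C : Fin m → ℂ) :=
      sum_conj_mul_sum_mul_conj M (fun g (l : Fin n) => fourierExp g l) q F C
    simp only [hQ_eq]
    exact (hdual f' c').trans <| (Finset.sum_congr rfl fun l hl => by
      simp only [fourierExp, hagree l hl]).trans (hdual f c).symm
  have hvalue : ∑ j, conj (c j) * Q (f j) = ((∑ j, w (f j) * ‖c j‖ : ℝ) : ℂ) := by
    push_cast
    simp only [hsign, Complex.conj_mul_ofReal_mul_div_norm]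
  have hle : ∀ j, ‖Q (f' j)‖ ≤ w (f' j) := fun j => by
    by_cases hj : f' j ∈ Set.range f
    · obtain ⟨k, hk⟩ := hj
      rw [← hk, hsign]
      exact Complex.norm_ofReal_mul_div_norm_le (hw _).le _
    · exact (hlt _ (hf'1 j) hj).le
  have hrange : ∀ j, f' j ∈ Set.range f :=
    mem_of_sum_mul_norm_le_re hc' hle (fun j => hlt _ (hf'1 j))
      (by rw [hpair, hvalue, Complex.ofReal_re, hsum])
  choose g hg using hrange
  have hg_inj : Function.Injective g := fun j₁ j₂ h => hf' (by rw [← hg j₁, ← hg j₂, h])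
  obtain ⟨hg_bij, hcoeff⟩ := hind.bijective_of_sum_comp_eq hc hg_inj (funext fun l => by
    simpa [Finset.sum_apply, hg] using hagree l l.2)
  exact ⟨Equiv.ofBijective g hg_bij, fun j => ⟨(hg j).symm, hcoeff j⟩⟩

theorem stmt_12 (n s : ℕ) (M : Finset (Fin n)) (f : Fin s → ℝ) (c : Fin s → ℂ)
    (hf : Function.Injective f) (hf1 : ∀ j, f j ∈ Set.Icc (0 : ℝ) 1)
    (hc : ∀ j, c j ≠ 0)
    (w : ℝ → ℝ) (hw : ∀ g, 0 < w g)
    (hind : LinearIndependent ℂ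
      (fun (j : Fin s) => fun (l : {l // l ∈ M}) =>
        Complex.exp (Complex.I * (2 * π * f j * ((l : Fin n) : ℕ)))))
    (q : Fin n → ℂ) (hq : ∀ l ∉ M, q l = 0)
    (Q : ℝ → ℂ)
    (hQ : Q = fun (g : ℝ) => ∑ l ∈ M, q l * Complex.exp (-Complex.I * (2 * π * g * (l : ℕ))))
    (hsign : ∀ j, Q (f j) = (w (f j) : ℂ) * (c j / (‖c j‖ : ℂ)))
    (hlt : ∀ g ∈ Set.Icc (0 : ℝ) 1, g ∉ Set.range f → ‖Q g‖ < w g)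
    (s' : ℕ) (f' : Fin s' → ℝ) (c' : Fin s' → ℂ)
    (hf' : Function.Injective f') (hf'1 : ∀ j, f' j ∈ Set.Icc (0 : ℝ) 1)
    (hc' : ∀ j, c' j ≠ 0)
    (hagree : ∀ l ∈ M,
      ∑ j, c' j * Complex.exp (Complex.I * (2 * π * f' j * (l : ℕ))) =
      ∑ j, c j * Complex.exp (Complex.I * (2 * π * f j * (l : ℕ))))
    (hsum : ∑ j, w (f' j) * ‖c' j‖ = ∑ j, w (f j) * ‖c j‖) :
    ∃ e : Fin s' ≃ Fin s, ∀ j, f' j = f (e j) ∧ c' j = c (e j) :=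
  stmt_12_general n s M f c hc w hw hind q Q hQ hsign hlt s' f' c' hf' hf'1 hc' hagree hsum
end
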